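/- Suppose each Φᵢ (i = 1,…,k) is a quasi-triangular system for (X, cl), let A ⊆ X be finite and B ⊆ X, and let rk^{Φ*} be the rank function of the finitary matroid (X, cl^{Φ*}). Then rk^{Φ*}(A|B) equals the maximal cardinality of a finite set A₀ ⊆ cl(Θ(A ∪ B)) such that the family (φ^r̄(a))_{r̄ ∈ ℕ^m, a ∈ A₀} is cl-independent over Θ(B). -/

import Mathlib

open Set

/-- A finitary matroid (pregeometry): a closure operator satisfying monotonicity,
idempotence, finite character and Steinitz exchange. -/
structure FinMatroid (X : Type*) where
  cl : Set X → Set X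
  subset_cl : ∀ A : Set X, A ⊆ cl A
  cl_mono : ∀ ⦃A B : Set X⦄, A ⊆ B → cl A ⊆ cl B
  cl_idem : ∀ A : Set X, cl (cl A) = cl A
  cl_finChar : ∀ (A : Set X) (a : X), a ∈ cl A → ∃ A₀ ⊆ A, A₀.Finite ∧ a ∈ cl A₀
  cl_exchange : ∀ (a b : X) (A : Set X), a ∈ cl (A ∪ {b}) → a ∉ cl A → b ∈ cl (A ∪ {a})

namespace FinMatroid

variable {X : Type*}

/-- `B` is `cl`-independent over `A`. -/
def Indep (M : FinMatroid X) (A B : Set X) : Prop :=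
  ∀ b ∈ B, b ∉ M.cl (A ∪ (B \ {b}))

/-- `B₀` is a basis for `B` over `A`. -/
def IsBasisOver (M : FinMatroid X) (A B B₀ : Set X) : Prop :=
  B₀ ⊆ B ∧ M.Indep A B₀ ∧ B ⊆ M.cl (A ∪ B₀)

/-- The rank `rk(B|A)`: the common cardinality of bases of `B` over `A`. -/
noncomputable def rk (M : FinMatroid X) (B A : Set X) : ℕ :=
  sInf {n : ℕ | ∃ B₀ : Set X, M.IsBasisOver A B B₀ ∧ B₀.ncard = n}

end FinMatroid

/-- `ψ` is a triangular system for the finitary matroid `M`. -/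
def Triangular {X : Type*} (M : FinMatroid X) {n : ℕ} (ψ : Fin n → X → X) : Prop :=
  ∀ (i : Fin n) (a : X) (B : Set X), a ∈ M.cl B →
    ψ i a ∈ M.cl (⋃ j ∈ Finset.Iic i, (ψ j) '' B)

/-- `ψ` is quasi-triangular: the system augmented by the identity map is triangular. -/
def QuasiTriangular {X : Type*} (M : FinMatroid X) {n : ℕ} (ψ : Fin n → X → X) : Prop :=
  Triangular M (Fin.cons id ψ)

/-- The composite operator `φ^r̄ = φ₁^{r₁} ∘ ⋯ ∘ φ_m^{r_m}` (operators indexed by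
pairs `(i, j)` with `i : Fin k`, `j : Fin (d i)`). -/
def opPow {X : Type*} {k : ℕ} {d : Fin k → ℕ} (φ : ∀ i : Fin k, Fin (d i) → X → X)
    (r : ∀ i : Fin k, Fin (d i) → ℕ) : X → X :=
  (List.finRange k).foldr
    (fun i f => ((List.finRange (d i)).foldr (fun j g => (φ i j)^[r i j] ∘ g) id) ∘ f) id

/-- The operators pairwise commute. -/
def Commuting {X : Type*} {k : ℕ} {d : Fin k → ℕ}
    (φ : ∀ i : Fin k, Fin (d i) → X → X) : Prop :=
  ∀ i j i' j', Function.Commute (φ i j) (φ i' j')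

/-- `Φ^{(s̄)}(A)`: images of elements of `A` under all `φ^r̄` with `‖r̄‖ = s̄`. -/
def PhiEq {X : Type*} {k : ℕ} {d : Fin k → ℕ} (φ : ∀ i : Fin k, Fin (d i) → X → X)
    (s : Fin k → ℕ) (A : Set X) : Set X :=
  {x | ∃ r : ∀ i : Fin k, Fin (d i) → ℕ,
    (∀ i, ∑ j, r i j = s i) ∧ ∃ a ∈ A, x = opPow φ r a}

/-- `Φ^{≼(s̄)}(A)`: images of elements of `A` under all `φ^r̄` with `‖r̄‖ ≼ s̄`. -/
def PhiLe {X : Type*} {k : ℕ} {d : Fin k → ℕ} (φ : ∀ i : Fin k, Fin (d i) → X → X)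
    (s : Fin k → ℕ) (A : Set X) : Set X :=
  {x | ∃ r : ∀ i : Fin k, Fin (d i) → ℕ,
    (∀ i, ∑ j, r i j ≤ s i) ∧ ∃ a ∈ A, x = opPow φ r a}

/-- `|Φ^{(s̄)}|`: the number of `r̄ ∈ ℕ^m` with `‖r̄‖ = s̄`. -/
noncomputable def cntEq {k : ℕ} (d : Fin k → ℕ) (s : Fin k → ℕ) : ℕ :=
  Nat.card {r : ∀ i : Fin k, Fin (d i) → ℕ // ∀ i, ∑ j, r i j = s i}

/-- `|Φ^{≼(s̄)}|`: the number of `r̄ ∈ ℕ^m` with `‖r̄‖ ≼ s̄`. -/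
noncomputable def cntLe {k : ℕ} (d : Fin k → ℕ) (s : Fin k → ℕ) : ℕ :=
  Nat.card {r : ∀ i : Fin k, Fin (d i) → ℕ // ∀ i, ∑ j, r i j ≤ s i}

/-- `Θ(A)`: images of elements of `A` under all the operators `φ^r̄`, `r̄ ∈ ℕ^m`. -/
def Theta {X : Type*} {k : ℕ} {d : Fin k → ℕ} (φ : ∀ i : Fin k, Fin (d i) → X → X)
    (A : Set X) : Set X :=
  {x | ∃ r : ∀ i : Fin k, Fin (d i) → ℕ, ∃ a ∈ A, x = opPow φ r a}

/-- The `Φ`-closure operator. -/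
noncomputable def clPhi {X : Type*} {k : ℕ} {d : Fin k → ℕ} (M : FinMatroid X)
    (φ : ∀ i : Fin k, Fin (d i) → X → X) (B : Set X) : Set X :=
  {a | ∃ s : Fin k → ℕ, M.rk (PhiEq φ s {a}) (PhiEq φ s B) < cntEq d s}

/-- The `Φ*`-closure operator. -/
noncomputable def clPhiStar {X : Type*} {k : ℕ} {d : Fin k → ℕ} (M : FinMatroid X)
    (φ : ∀ i : Fin k, Fin (d i) → X → X) (B : Set X) : Set X :=
  {a | ∃ s : Fin k → ℕ, M.rk (PhiLe φ s {a}) (PhiLe φ s B) < cntLe d s}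

/-- View a function `Fin k → ℕ` as a monomial exponent. -/
noncomputable def expOf {k : ℕ} (e : Fin k → ℕ) : Fin k →₀ ℕ :=
  Finsupp.equivFunOnFinite.symm e

/-- The family `(φ^r̄(a))_{r̄ ∈ ℕ^m, a ∈ A₀}` is `cl`-independent over `C`: each
member is outside the closure of `C` together with all the other members. -/
def FamIndepOver {X : Type*} {k : ℕ} {d : Fin k → ℕ} (M : FinMatroid X)
    (φ : ∀ i : Fin k, Fin (d i) → X → X) (C A₀ : Set X) : Prop :=
  ∀ (r : ∀ i : Fin k, Fin (d i) → ℕ) (a : X), a ∈ A₀ →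
    opPow φ r a ∉ M.cl (C ∪
      {x | ∃ (u : ∀ i : Fin k, Fin (d i) → ℕ) (b : X),
        b ∈ A₀ ∧ (u ≠ r ∨ b ≠ a) ∧ x = opPow φ u b})

/-! In the matroid `(X, cl^{Φ*})`, `rk^{Φ*}(A|B)` is the size of a `cl^{Φ*}`-basis `B₀ ⊆ A` of `A`
over `B`, and by Steinitz exchange no set that is `cl^{Φ*}`-independent over `B` and lies in
`cl^{Φ*}(A ∪ B)` is larger. Two facts reduce the theorem to this. First, `A₀` is
`cl^{Φ*}`-independent over `B` exactly when the family `(φ^r̄(a))` is `cl`-independent over `Θ(B)`: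
an independent family makes, for every `s̄`, the `|Φ^{≼(s̄)}|` distinct elements of `Φ^{≼(s̄)}(a)`
independent over `Φ^{≼(s̄)}(B ∪ A₀ ∖ {a})`, while a dependence involves finitely many exponents and
causes a rank drop at any `s̄` bounding them. Second, `cl(Θ(A ∪ B)) ⊆ cl^{Φ*}(A ∪ B)`, because
`cl ⊆ cl^{Φ*}` (take `s̄ = 0`) and `φ^ū(c) ∈ cl^{Φ*}(Z)` for `c ∈ Z` (take `s̄ = ‖ū‖`). -/

namespace FinMatroid

variable {X : Type*} (M : FinMatroid X)

theorem cl_subset_cl {A B : Set X} (h : A ⊆ M.cl B) : M.cl A ⊆ M.cl B :=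
  M.cl_idem B ▸ M.cl_mono h

variable {M}

theorem Indep.insert_diff_singleton {B I : Set X} (hI : M.Indep B I) {i : X} (hi : i ∈ I) :
    M.Indep (insert i B) (I \ {i}) := by
  intro x hx hxcl
  refine hI x hx.1 (M.cl_mono ?_ hxcl)
  rintro y ((rfl | hy) | ⟨⟨hyI, -⟩, hyx⟩)
  · exact Or.inr ⟨hi, fun h => hx.2 h.symm⟩
  · exact Or.inl hy
  · exact Or.inr ⟨hyI, hyx⟩

/-- Steinitz exchange, by induction on `B₀`: when `B₀` grows by `b` and `I ⊄ cl(B ∪ B₀)`,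
exchange `b` for some `i ∈ I` and continue with `I \ {i}`, independent over `insert i B`. -/
theorem Indep.ncard_le_of_subset_cl {B I B₀ : Set X} (hB₀ : B₀.Finite) (hI : M.Indep B I)
    (hspan : I ⊆ M.cl (B ∪ B₀)) : I.ncard ≤ B₀.ncard := by
  induction B₀, hB₀ using Set.Finite.induction_on generalizing B I with
  | empty =>
    have hIempty : I = ∅ := eq_empty_of_forall_notMem fun x hx =>
      hI x hx (M.cl_mono (by rw [union_empty]; exact subset_union_left) (hspan hx))
    simp [hIempty]
  | @insert b B₀ hb hB₀ ih =>
    by_cases hI' : I ⊆ M.cl (B ∪ B₀)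
    · exact (ih hI hI').trans (ncard_le_ncard (subset_insert b B₀) (hB₀.insert b))
    obtain ⟨i, hiI, hi⟩ := not_subset.1 hI'
    rcases I.finite_or_infinite with hIfin | hIinf
    · have hbi : b ∈ M.cl ((B ∪ B₀) ∪ {i}) := M.cl_exchange i b _
        (by rw [union_assoc, union_singleton]; exact hspan hiI) hi
      have hspan' : B ∪ insert b B₀ ⊆ M.cl (insert i B ∪ B₀) := by
        rintro y (hy | rfl | hy)
        · exact M.subset_cl _ (Or.inl (Or.inr hy))
        · exact M.cl_mono (fun z => by
            simp only [mem_union, mem_insert_iff, mem_singleton_iff]; tauto) hbi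
        · exact M.subset_cl _ (Or.inr hy)
      have := ih (hI.insert_diff_singleton hiI)
        (sdiff_subset.trans (hspan.trans (M.cl_subset_cl hspan')))
      rw [ncard_insert_of_notMem hb hB₀, ← ncard_sdiff_singleton_add_one hiI hIfin]
      omega
    · simp [hIinf.ncard]

theorem exists_isBasisOver_subset {C S T : Set X} (hT : T.Finite) (hTS : T ⊆ S)
    (hspan : S ⊆ M.cl (C ∪ T)) : ∃ B₀ ⊆ T, M.IsBasisOver C S B₀ := by
  obtain ⟨B₀, ⟨hB₀T, hB₀span⟩, hmin⟩ :=
    (hT.finite_subsets.subset (fun U hU => hU.1) :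
      {U | U ⊆ T ∧ S ⊆ M.cl (C ∪ U)}.Finite).exists_minimal ⟨T, subset_rfl, hspan⟩
  refine ⟨B₀, hB₀T, hB₀T.trans hTS, fun x hx hxcl => ?_, hB₀span⟩
  have hsmaller : S ⊆ M.cl (C ∪ (B₀ \ {x})) := by
    refine hB₀span.trans (M.cl_subset_cl fun y hy => ?_)
    by_cases hyx : y = x
    · exact hyx ▸ hxcl
    · rcases hy with hy | hy
      · exact M.subset_cl _ (Or.inl hy)
      · exact M.subset_cl _ (Or.inr ⟨hy, hyx⟩)
  exact (hmin ⟨sdiff_subset.trans hB₀T, hsmaller⟩ sdiff_subset hx).2 rfl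

theorem IsBasisOver.rk_le {C S B₀ : Set X} (h : M.IsBasisOver C S B₀) : M.rk S C ≤ B₀.ncard :=
  Nat.sInf_le ⟨B₀, h, rfl⟩

theorem rk_le_ncard_of_subset_cl {C S T : Set X} (hT : T.Finite) (hTS : T ⊆ S)
    (hspan : S ⊆ M.cl (C ∪ T)) : M.rk S C ≤ T.ncard := by
  obtain ⟨B₀, hB₀T, hB₀⟩ := M.exists_isBasisOver_subset hT hTS hspan
  exact hB₀.rk_le.trans (ncard_le_ncard hB₀T hT)

theorem IsBasisOver.rk_eq {C S B₀ : Set X} (hS : S.Finite) (h : M.IsBasisOver C S B₀) :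
    M.rk S C = B₀.ncard := by
  refine h.rk_le.antisymm (le_csInf ⟨_, B₀, h, rfl⟩ ?_)
  rintro n ⟨B₁, hB₁, rfl⟩
  exact h.2.1.ncard_le_of_subset_cl (hS.subset hB₁.1) (h.1.trans hB₁.2.2)

end FinMatroid

section Exponents

variable {k : ℕ} {d : Fin k → ℕ}

def ExpLe (d : Fin k → ℕ) (s : Fin k → ℕ) : Set (∀ i : Fin k, Fin (d i) → ℕ) :=
  {r | ∀ i, ∑ j, r i j ≤ s i}

theorem zero_mem_expLe (s : Fin k → ℕ) : (0 : ∀ i : Fin k, Fin (d i) → ℕ) ∈ ExpLe d s :=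
  fun i => by simp

theorem le_of_mem_expLe {s : Fin k → ℕ} {r : ∀ i : Fin k, Fin (d i) → ℕ} (hr : r ∈ ExpLe d s)
    (i : Fin k) (j : Fin (d i)) : r i j ≤ s i :=
  (Finset.single_le_sum (fun _ _ => Nat.zero_le _) (Finset.mem_univ j)).trans (hr i)

theorem expLe_finite (s : Fin k → ℕ) : (ExpLe d s).Finite :=
  (Finite.pi fun i => Finite.pi fun _ => finite_Iic (s i)).subset
    fun _ hr i _ j _ => le_of_mem_expLe hr i j

theorem expLe_zero : ExpLe d 0 = {0} :=
  eq_singleton_iff_unique_mem.2 ⟨zero_mem_expLe 0, fun _ hr =>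
    funext fun i => funext fun j => Nat.eq_zero_of_le_zero (le_of_mem_expLe hr i j)⟩

theorem cntLe_pos (s : Fin k → ℕ) : 0 < cntLe d s :=
  (ncard_pos (expLe_finite s)).2 ⟨0, zero_mem_expLe s⟩

theorem ncard_expLe_diff_lt {s : Fin k → ℕ} {r : ∀ i : Fin k, Fin (d i) → ℕ}
    (hr : r ∈ ExpLe d s) : (ExpLe d s \ {r}).ncard < cntLe d s :=
  ncard_sdiff_singleton_lt_of_mem hr (expLe_finite s)

theorem exists_subset_expLe {W : Set (∀ i : Fin k, Fin (d i) → ℕ)} (hW : W.Finite) :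
    ∃ s, W ⊆ ExpLe d s :=
  ⟨fun i => hW.toFinset.sup fun r => ∑ j, r i j, fun _ hr i =>
    Finset.le_sup (f := fun r => ∑ j, r i j) (hW.mem_toFinset.2 hr)⟩

end Exponents

section PhiClosure

variable {X : Type*} {k : ℕ} {d : Fin k → ℕ} (M : FinMatroid X)
  (φ : ∀ i : Fin k, Fin (d i) → X → X)

theorem opPow_zero (x : X) : opPow φ 0 x = x := by
  simp [opPow]

theorem mem_phiLe {s : Fin k → ℕ} {r : ∀ i : Fin k, Fin (d i) → ℕ} (hr : r ∈ ExpLe d s)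
    {Z : Set X} {a : X} (ha : a ∈ Z) : opPow φ r a ∈ PhiLe φ s Z :=
  ⟨r, hr, a, ha, rfl⟩

theorem phiLe_singleton (s : Fin k → ℕ) (a : X) :
    PhiLe φ s {a} = (fun r => opPow φ r a) '' ExpLe d s := by
  ext x
  simp [PhiLe, ExpLe, eq_comm]

theorem phiLe_zero (Z : Set X) : PhiLe φ 0 Z = Z := by
  ext x
  constructor
  · rintro ⟨r, hr, a, ha, rfl⟩
    rwa [show r = 0 from expLe_zero.subset hr, opPow_zero]
  · exact fun hx => ⟨0, zero_mem_expLe 0, x, hx, (opPow_zero φ x).symm⟩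

theorem phiLe_singleton_finite (s : Fin k → ℕ) (a : X) : (PhiLe φ s {a}).Finite := by
  rw [phiLe_singleton]
  exact (expLe_finite s).image _

theorem ncard_phiLe_singleton_le (s : Fin k → ℕ) (a : X) : (PhiLe φ s {a}).ncard ≤ cntLe d s := by
  rw [phiLe_singleton]
  exact ncard_image_le (expLe_finite s)

theorem cl_subset_clPhiStar (Z : Set X) : M.cl Z ⊆ clPhiStar M φ Z := by
  intro a ha
  refine ⟨0, ?_⟩
  rw [phiLe_zero, phiLe_zero]
  calc M.rk {a} Z ≤ (∅ : Set X).ncard :=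
        M.rk_le_ncard_of_subset_cl finite_empty (empty_subset _) (by simpa using ha)
    _ < cntLe d 0 := by rw [ncard_empty]; exact cntLe_pos 0

/-- For `x = φ^ū(c)` and `s̄ = ‖ū‖`, the element `x = φ^0(x)` of `Φ^{≼(s̄)}({x})` already lies
in `Φ^{≼(s̄)}(Z)`. -/
theorem theta_subset_clPhiStar (Z : Set X) : Theta φ Z ⊆ clPhiStar M φ Z := by
  rintro _ ⟨u, c, hc, rfl⟩
  set x := opPow φ u c
  set s : Fin k → ℕ := fun i => ∑ j, u i j
  have hxZ : x ∈ PhiLe φ s Z := mem_phiLe φ (fun _ => le_rfl) hc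
  have hxS : x ∈ PhiLe φ s {x} := ⟨0, zero_mem_expLe s, x, rfl, (opPow_zero φ x).symm⟩
  have hS := phiLe_singleton_finite φ s x
  refine ⟨s, ?_⟩
  calc M.rk (PhiLe φ s {x}) (PhiLe φ s Z) ≤ (PhiLe φ s {x} \ {x}).ncard :=
        M.rk_le_ncard_of_subset_cl hS.sdiff sdiff_subset fun y hy => M.subset_cl _ <| by
          by_cases hyx : y = x
          · exact Or.inl (hyx ▸ hxZ)
          · exact Or.inr ⟨hy, hyx⟩
    _ < (PhiLe φ s {x}).ncard := ncard_sdiff_singleton_lt_of_mem hxS hS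
    _ ≤ cntLe d s := ncard_phiLe_singleton_le φ s x

theorem cl_theta_subset_of_cl_eq {M' : FinMatroid X} (hM' : M'.cl = clPhiStar M φ)
    (Z : Set X) : M.cl (Theta φ Z) ⊆ M'.cl Z :=
  (hM' ▸ cl_subset_clPhiStar M φ _ : M.cl (Theta φ Z) ⊆ M'.cl (Theta φ Z)).trans
    (M'.cl_subset_cl (hM' ▸ theta_subset_clPhiStar M φ Z))

variable {M φ}

theorem FamIndepOver.injective {C A₀ : Set X} {a : X} (h : FamIndepOver M φ C A₀)
    (ha : a ∈ A₀) : Function.Injective fun r => opPow φ r a := by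
  intro u v huv
  by_contra hne
  exact h v a ha (M.subset_cl _ (Or.inr ⟨u, a, ha, Or.inl hne, huv.symm⟩))

theorem FamIndepOver.indep_phiLe {A₀ B : Set X} {a : X} (h : FamIndepOver M φ (Theta φ B) A₀)
    (ha : a ∈ A₀) (s : Fin k → ℕ) :
    M.Indep (PhiLe φ s (B ∪ (A₀ \ {a}))) (PhiLe φ s {a}) := by
  rintro _ ⟨r, -, a', ha', rfl⟩ hcl
  rw [mem_singleton_iff.1 ha'] at hcl
  refine h r a ha (M.cl_mono ?_ hcl)
  rintro _ (⟨u, -, c, hc | ⟨hcA, hca⟩, rfl⟩ | ⟨⟨u, -, a'', ha'', rfl⟩, hne⟩)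
  · exact Or.inl ⟨u, c, hc, rfl⟩
  · exact Or.inr ⟨u, c, hcA, Or.inr hca, rfl⟩
  · rw [mem_singleton_iff.1 ha''] at hne ⊢
    exact Or.inr ⟨u, a, ha, Or.inl fun hur => hne (hur ▸ rfl), rfl⟩

theorem FamIndepOver.notMem_clPhiStar {A₀ B : Set X} {a : X}
    (h : FamIndepOver M φ (Theta φ B) A₀) (ha : a ∈ A₀) :
    a ∉ clPhiStar M φ (B ∪ (A₀ \ {a})) := by
  rintro ⟨s, hs⟩
  have hbasis : M.IsBasisOver (PhiLe φ s (B ∪ (A₀ \ {a}))) (PhiLe φ s {a}) (PhiLe φ s {a}) :=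
    ⟨subset_rfl, h.indep_phiLe ha s, fun x hx => M.subset_cl _ (Or.inr hx)⟩
  rw [hbasis.rk_eq (phiLe_singleton_finite φ s a), phiLe_singleton,
    ncard_image_of_injective _ (h.injective ha)] at hs
  exact lt_irrefl _ hs

/-- A dependence of `φ^r̄(a)` on the other members involves only finitely many exponents; at an
`s̄` bounding all of them, `Φ^{≼(s̄)}({a})` is spanned over `Φ^{≼(s̄)}(B ∪ (A₀ \ {a}))` by the
images of `a` under the exponents other than `r̄`. -/
theorem famIndepOver_of_forall_notMem_clPhiStar {A₀ B : Set X}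
    (h : ∀ a ∈ A₀, a ∉ clPhiStar M φ (B ∪ (A₀ \ {a}))) : FamIndepOver M φ (Theta φ B) A₀ := by
  intro r a ha hcl
  obtain ⟨F, hFsub, hFfin, hxF⟩ := M.cl_finChar _ _ hcl
  have hrep : ∀ y : F, ∃ u c, (c ∈ B ∨ c ∈ A₀ ∧ (u ≠ r ∨ c ≠ a)) ∧ y.1 = opPow φ u c := by
    rintro ⟨y, hy⟩
    rcases hFsub hy with ⟨u, c, hc, rfl⟩ | ⟨u, c, hc, hne, rfl⟩
    · exact ⟨u, c, Or.inl hc, rfl⟩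
    · exact ⟨u, c, Or.inr ⟨hc, hne⟩, rfl⟩
  choose u c hc hyuc using hrep
  have := hFfin.to_subtype
  obtain ⟨s, hs⟩ := exists_subset_expLe ((finite_range u).insert r)
  set T := (fun w => opPow φ w a) '' (ExpLe d s \ {r})
  have hFT : F ⊆ PhiLe φ s (B ∪ (A₀ \ {a})) ∪ T := by
    intro y hy
    have hus := hs (mem_insert_of_mem _ ⟨⟨y, hy⟩, rfl⟩)
    rw [show y = _ from hyuc ⟨y, hy⟩]
    rcases hc ⟨y, hy⟩ with hcB | ⟨hcA, hne⟩
    · exact Or.inl (mem_phiLe φ hus (Or.inl hcB))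
    by_cases hca : c ⟨y, hy⟩ = a
    · rw [hca]
      exact Or.inr ⟨_, ⟨hus, hne.resolve_right (not_not.2 hca)⟩, rfl⟩
    · exact Or.inl (mem_phiLe φ hus (Or.inr ⟨hcA, hca⟩))
  have hspan : PhiLe φ s {a} ⊆ M.cl (PhiLe φ s (B ∪ (A₀ \ {a})) ∪ T) := by
    rw [phiLe_singleton]
    rintro _ ⟨w, hw, rfl⟩
    by_cases hwr : w = r
    · exact hwr ▸ M.cl_mono hFT hxF
    · exact M.subset_cl _ (Or.inr ⟨w, ⟨hw, hwr⟩, rfl⟩)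
  have hTS : T ⊆ PhiLe φ s {a} := by
    rw [phiLe_singleton]
    exact image_mono sdiff_subset
  refine h a ha ⟨s, ?_⟩
  calc _ ≤ T.ncard := M.rk_le_ncard_of_subset_cl ((expLe_finite s).sdiff.image _) hTS hspan
    _ ≤ (ExpLe d s \ {r}).ncard := ncard_image_le (expLe_finite s).sdiff
    _ < cntLe d s := ncard_expLe_diff_lt (hs (mem_insert r _))

theorem famIndepOver_theta_iff {A₀ B : Set X} :
    FamIndepOver M φ (Theta φ B) A₀ ↔ ∀ a ∈ A₀, a ∉ clPhiStar M φ (B ∪ (A₀ \ {a})) :=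
  ⟨fun h _ ha => h.notMem_clPhiStar ha, famIndepOver_of_forall_notMem_clPhiStar⟩

end PhiClosure

theorem statement12_general {X : Type*} (M : FinMatroid X) {k : ℕ} {d : Fin k → ℕ}
    (φ : ∀ i : Fin k, Fin (d i) → X → X) (A B : Set X) (hA : A.Finite)
    (M' : FinMatroid X) (hM' : M'.cl = clPhiStar M φ) :
    IsGreatest {n : ℕ | ∃ A₀ : Set X, A₀.Finite ∧ A₀ ⊆ M.cl (Theta φ (A ∪ B)) ∧
      FamIndepOver M φ (Theta φ B) A₀ ∧ A₀.ncard = n} (M'.rk A B) := by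
  have hindep : ∀ A₀, M'.Indep B A₀ ↔ FamIndepOver M φ (Theta φ B) A₀ := fun A₀ => by
    rw [famIndepOver_theta_iff, FinMatroid.Indep, hM']
  obtain ⟨B₀, hB₀A, hB₀⟩ :=
    M'.exists_isBasisOver_subset hA subset_rfl fun _ hy => M'.subset_cl _ (Or.inr hy)
  rw [hB₀.rk_eq hA]
  refine ⟨⟨B₀, hA.subset hB₀A, fun b hb => M.subset_cl _ ?_, (hindep B₀).1 hB₀.2.1, rfl⟩, ?_⟩
  · exact ⟨0, b, Or.inl (hB₀A hb), (opPow_zero φ b).symm⟩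
  rintro _ ⟨A₀, -, hA₀cl, hA₀, rfl⟩
  have hAB : A ∪ B ⊆ M'.cl (B ∪ B₀) := by
    rintro y (hy | hy)
    · exact hB₀.2.2 hy
    · exact M'.subset_cl _ (Or.inl hy)
  exact ((hindep A₀).2 hA₀).ncard_le_of_subset_cl (hA.subset hB₀A)
    (hA₀cl.trans ((cl_theta_subset_of_cl_eq M φ hM' _).trans (M'.cl_subset_cl hAB)))

/-- **Corollary 3.4.** Suppose each `Φᵢ` is quasi-triangular, `A` is finite, and
`rk^{Φ*}` is the rank function of the finitary matroid `(X, cl^{Φ*})`. Then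
`rk^{Φ*}(A|B)` is the maximal cardinality of a finite set `A₀ ⊆ cl(Θ(A ∪ B))` such
that the family `(φ^r̄(a))_{r̄ ∈ ℕ^m, a ∈ A₀}` is `cl`-independent over `Θ(B)`. -/
theorem statement12 {X : Type*} (M : FinMatroid X) {k : ℕ} (hk : 0 < k) {d : Fin k → ℕ}
    (hd : ∀ i, 0 < d i) (φ : ∀ i : Fin k, Fin (d i) → X → X) (hcomm : Commuting φ)
    (hqtri : ∀ i, QuasiTriangular M (φ i)) (A B : Set X) (hA : A.Finite)
    (M' : FinMatroid X) (hM' : M'.cl = clPhiStar M φ) :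
    IsGreatest {n : ℕ | ∃ A₀ : Set X, A₀.Finite ∧ A₀ ⊆ M.cl (Theta φ (A ∪ B)) ∧
      FamIndepOver M φ (Theta φ B) A₀ ∧ A₀.ncard = n} (M'.rk A B) :=
  statement12_general M φ A B hA M' hM'
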